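/- arXiv:1605.02131 — 4 statements merged into one kernel-verified Lean document; each statement's English description precedes it below -/
import Mathlib

section
/- For integers t, k, v, m with t ≥ 2, v ≥ 2, k ≥ 2t and 2 ≤ m ≤ v^t, and any natural number N satisfying N ≥ (1 + ln(t·C(k,t−1)·C(v^t, m−1))) / ln(v^t/(m−1)), there exists a partial m-covering array PCA(N; t, k, v, m); i.e., there exists an array A : Fin N → Fin k → Fin v such that for every t-subset C of columns, the rows of A restricted to C take at least m distinct values in (Fin v)^C. -/
/-!
Take a uniformly random array. For a `t`-set `C` of columns and a set `S` of `m - 1` tuples on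
`C`, the bad event "every row restricted to `C` lies in `S`" has probability `((m - 1) / v ^ t) ^ N`,
and it is mutually independent of the bad events whose column sets avoid `C`. At most
`t * C(k, t - 1) * C(v ^ t, m - 1) - 1` other bad events have a column set meeting `C`, and the bound
on `N` gives the condition `e * p * (d + 1) ≤ 1` of the symmetric Lovász Local Lemma. An array
avoiding every bad event covers at least `m` tuples on every `t`-set of columns.
-/

open MeasureTheory ProbabilityTheory Finset

/-- The number of distinct `t`-tuples `x : C → Fin v` covered by the rows of the array `A`
restricted to the column set `C`. -/
noncomputable def coverCount {N k v : ℕ} (A : Fin N → Fin k → Fin v) (C : Finset (Fin k)) : ℕ :=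
  Nat.card {x : C → Fin v // ∃ i : Fin N, (fun j : C => A i j) = x}

section LovaszLocalLemma

variable {Ω ι : Type*} [MeasurableSpace Ω] {μ : Measure Ω} [IsProbabilityMeasure μ]
  {A : ι → Set Ω} [DecidableEq ι]

lemma measureReal_biInter_compl_insert {a : ι} (ha : MeasurableSet (A a)) (J : Finset ι) :
    μ.real (⋂ j ∈ insert a J, (A j)ᶜ) =
      μ.real (⋂ j ∈ J, (A j)ᶜ) - μ.real (A a ∩ ⋂ j ∈ J, (A j)ᶜ) := by
  rw [set_biInter_insert, ← Set.sdiff_eq_compl_inter, Set.inter_comm (A a),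
    ← measureReal_sdiff_add_inter (s := ⋂ j ∈ J, (A j)ᶜ) ha]
  ring

lemma one_sub_mul_le_measureReal_biInter_compl_insert {a : ι} (ha : MeasurableSet (A a))
    {J : Finset ι} {x : ℝ} (h : μ.real (A a ∩ ⋂ j ∈ J, (A j)ᶜ) ≤ x * μ.real (⋂ j ∈ J, (A j)ᶜ)) :
    (1 - x) * μ.real (⋂ j ∈ J, (A j)ᶜ) ≤ μ.real (⋂ j ∈ insert a J, (A j)ᶜ) := by
  rw [measureReal_biInter_compl_insert ha]
  linarith

lemma prod_one_sub_mul_le_measureReal_biInter_compl (hA : ∀ i, MeasurableSet (A i))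
    {x : ι → ℝ} (hx : ∀ i, x i ≤ 1) (S T : Finset ι)
    (h : ∀ U ⊆ T, ∀ a ∈ T, a ∉ U →
      μ.real (A a ∩ ⋂ j ∈ U ∪ S, (A j)ᶜ) ≤ x a * μ.real (⋂ j ∈ U ∪ S, (A j)ᶜ)) :
    (∏ j ∈ T, (1 - x j)) * μ.real (⋂ j ∈ S, (A j)ᶜ) ≤ μ.real (⋂ j ∈ T ∪ S, (A j)ᶜ) := by
  induction T using Finset.induction_on with
  | empty => simp
  | insert a T ha ih =>
    have ih' := ih fun U hU b hb hbU => h U (hU.trans (subset_insert a T)) b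
      (mem_insert_of_mem hb) hbU
    rw [prod_insert ha, mul_assoc, insert_union]
    calc (1 - x a) * ((∏ j ∈ T, (1 - x j)) * μ.real (⋂ j ∈ S, (A j)ᶜ))
        ≤ (1 - x a) * μ.real (⋂ j ∈ T ∪ S, (A j)ᶜ) :=
          mul_le_mul_of_nonneg_left ih' (by linarith [hx a])
      _ ≤ _ := one_sub_mul_le_measureReal_biInter_compl_insert (hA a)
          (h T (subset_insert a T) a (mem_insert_self a T) ha)

variable (Γ : ι → Finset ι) {x : ι → ℝ}

lemma measureReal_inter_biInter_compl_le_of_lovasz (hA : ∀ i, MeasurableSet (A i))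
    (hx0 : ∀ i, 0 ≤ x i) (hx1 : ∀ i, x i ≤ 1)
    (hp : ∀ i, μ.real (A i) ≤ x i * ∏ j ∈ Γ i, (1 - x j))
    (hind : ∀ i (J : Finset ι), i ∉ J → Disjoint J (Γ i) →
      μ.real (A i ∩ ⋂ j ∈ J, (A j)ᶜ) = μ.real (A i) * μ.real (⋂ j ∈ J, (A j)ᶜ))
    (J : Finset ι) {i : ι} (hi : i ∉ J) :
    μ.real (A i ∩ ⋂ j ∈ J, (A j)ᶜ) ≤ x i * μ.real (⋂ j ∈ J, (A j)ᶜ) := by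
  induction J using Finset.strongInduction generalizing i with
  | H J ih =>
  -- `A i` is independent of the events in `J₂`; those in `J₁` are peeled off one at a time
  set J₁ := J.filter (· ∈ Γ i)
  set J₂ := J.filter (· ∉ Γ i)
  have hJ₂ : J₂ ⊆ J := filter_subset _ _
  have peel := prod_one_sub_mul_le_measureReal_biInter_compl hA hx1 J₂ J₁
    fun U hU a ha haU => by
      have haU₂ : a ∉ U ∪ J₂ := by simp [haU, J₂, (mem_filter.1 ha).2]
      have hsub : U ∪ J₂ ⊆ J := union_subset (hU.trans (filter_subset _ _)) hJ₂
      exact ih _ ((ssubset_iff_of_subset hsub).2 ⟨a, filter_subset _ _ ha, haU₂⟩) haU₂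
  rw [filter_union_filter_not_eq] at peel
  have hprod : ∏ j ∈ Γ i, (1 - x j) ≤ ∏ j ∈ J₁, (1 - x j) :=
    prod_le_prod_of_subset_of_le_one (fun j hj => (mem_filter.1 hj).2)
      (fun j _ => by linarith [hx1 j]) (fun j _ _ => by linarith [hx0 j])
  calc μ.real (A i ∩ ⋂ j ∈ J, (A j)ᶜ) ≤ μ.real (A i ∩ ⋂ j ∈ J₂, (A j)ᶜ) :=
        measureReal_mono (Set.inter_subset_inter_right _ (Set.biInter_subset_biInter_left hJ₂))
    _ = μ.real (A i) * μ.real (⋂ j ∈ J₂, (A j)ᶜ) :=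
        hind i J₂ (fun h => hi (hJ₂ h)) (disjoint_left.2 fun _ hj => (mem_filter.1 hj).2)
    _ ≤ x i * ((∏ j ∈ J₁, (1 - x j)) * μ.real (⋂ j ∈ J₂, (A j)ᶜ)) := by
        rw [← mul_assoc]
        gcongr
        exact (hp i).trans (mul_le_mul_of_nonneg_left hprod (hx0 i))
    _ ≤ x i * μ.real (⋂ j ∈ J, (A j)ᶜ) := mul_le_mul_of_nonneg_left peel (hx0 i)

theorem exists_forall_notMem_of_lovasz [Fintype ι] (hA : ∀ i, MeasurableSet (A i))
    (hx0 : ∀ i, 0 ≤ x i) (hx1 : ∀ i, x i < 1)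
    (hp : ∀ i, μ.real (A i) ≤ x i * ∏ j ∈ Γ i, (1 - x j))
    (hind : ∀ i (J : Finset ι), i ∉ J → Disjoint J (Γ i) →
      μ.real (A i ∩ ⋂ j ∈ J, (A j)ᶜ) = μ.real (A i) * μ.real (⋂ j ∈ J, (A j)ᶜ)) :
    ∃ ω, ∀ i, ω ∉ A i := by
  have hx1' i : x i ≤ 1 := (hx1 i).le
  have hpos : 0 < μ.real (⋂ j ∈ (univ : Finset ι), (A j)ᶜ) := by
    have := prod_one_sub_mul_le_measureReal_biInter_compl hA hx1' ∅ univ fun U _ a _ haU =>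
      measureReal_inter_biInter_compl_le_of_lovasz Γ hA hx0 hx1' hp hind _ (by simpa using haU)
    simp only [union_empty, notMem_empty, Set.iInter_of_empty, Set.iInter_univ,
      probReal_univ, mul_one] at this
    exact (prod_pos fun j _ => sub_pos.2 (hx1 j)).trans_le this
  obtain ⟨ω, hω⟩ := nonempty_of_measureReal_ne_zero hpos.ne'
  exact ⟨ω, fun i => Set.mem_iInter₂.1 hω i (mem_univ i)⟩

lemma exp_neg_one_le_one_sub_inv_pow (d : ℕ) : Real.exp (-1) ≤ (1 - ((d : ℝ) + 1)⁻¹) ^ d := by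
  rcases d with _ | d
  · simp
  · have h : 1 - ((↑(d + 1) : ℝ) + 1)⁻¹ = (1 + (↑(d + 1) : ℝ)⁻¹)⁻¹ := by
      field_simp
      push_cast
      ring
    rw [h, inv_pow, Real.exp_neg]
    exact inv_anti₀ (by positivity) Real.one_add_inv_pow_le_exp

theorem exists_forall_notMem_of_symmetric_lovasz [Fintype ι] (hA : ∀ i, MeasurableSet (A i))
    {d : ℕ} {p : ℝ} (hd : 0 < d) (hΓ : ∀ i, #(Γ i) ≤ d) (hp : ∀ i, μ.real (A i) ≤ p)
    (hpd : Real.exp 1 * p * (d + 1) ≤ 1)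
    (hind : ∀ i (J : Finset ι), i ∉ J → Disjoint J (Γ i) →
      μ.real (A i ∩ ⋂ j ∈ J, (A j)ᶜ) = μ.real (A i) * μ.real (⋂ j ∈ J, (A j)ᶜ)) :
    ∃ ω, ∀ i, ω ∉ A i := by
  set y : ℝ := ((d : ℝ) + 1)⁻¹
  have hy0 : 0 < y := by positivity
  have hy1 : y ≤ 1 := inv_le_one_of_one_le₀ (by simp)
  refine exists_forall_notMem_of_lovasz Γ (x := fun _ => y) hA (fun _ => hy0.le)
    (fun _ => inv_lt_one_of_one_lt₀ ?_) (fun i => ?_) hind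
  · have : (1 : ℝ) ≤ d := by exact_mod_cast hd
    linarith
  rw [prod_const]
  calc μ.real (A i) ≤ p := hp i
    _ ≤ y * Real.exp (-1) := by
        rw [Real.exp_neg, ← mul_inv, ← one_div, le_div_iff₀ (by positivity)]
        linarith
    _ ≤ y * (1 - y) ^ d := by gcongr; exact exp_neg_one_le_one_sub_inv_pow d
    _ ≤ y * (1 - y) ^ #(Γ i) := by
        gcongr y * ?_
        exact pow_le_pow_of_le_one (by linarith) (by linarith) (hΓ i)

end LovaszLocalLemma

section DependsOn

variable {ι : Type*} {β : ι → Type*}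

-- `(a, b) ↦ (a on D and b off D, b on D and a off D)` is a bijection `E × F ≃ (E ∩ F) × Π i, β i`.
lemma card_inter_mul_card_eq_of_dependsOn {D : Set ι} {E F : Set (Π i, β i)}
    (hE : DependsOn (· ∈ E) D) (hF : DependsOn (· ∈ F) Dᶜ) :
    Nat.card ↥(E ∩ F) * Nat.card (Π i, β i) = Nat.card E * Nat.card F := by
  classical
  have mem_E (a b : Π i, β i) : a ∈ E ↔ D.piecewise a b ∈ E :=
    Iff.of_eq (hE fun i hi => (D.piecewise_eq_of_mem a b hi).symm)
  have mem_F (a b : Π i, β i) : b ∈ F ↔ D.piecewise a b ∈ F :=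
    Iff.of_eq (hF fun i hi => (D.piecewise_eq_of_notMem a b hi).symm)
  have piecewise_swap (a b : Π i, β i) : D.piecewise (D.piecewise a b) (D.piecewise b a) = a := by
    ext i; by_cases hi : i ∈ D <;> simp [hi]
  let e : E × F ≃ ↥(E ∩ F) × (Π i, β i) :=
    { toFun := fun p => (⟨D.piecewise p.1 p.2, (mem_E _ _).1 p.1.2, (mem_F _ _).1 p.2.2⟩,
        D.piecewise p.2 p.1)
      invFun := fun p => (⟨D.piecewise p.1 p.2, (mem_E _ _).1 p.1.2.1⟩,
        ⟨D.piecewise p.2 p.1, (mem_F _ _).1 p.1.2.2⟩)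
      left_inv := fun p => by ext <;> simp only [piecewise_swap]
      right_inv := fun p => by ext <;> simp only [piecewise_swap] }
  rw [← Nat.card_prod, ← Nat.card_prod, Nat.card_congr e]

lemma dependsOn_mem_biInter_compl {κ : Type*} {E : κ → Set (Π i, β i)} {J : Finset κ} {D : Set ι}
    (hE : ∀ j ∈ J, DependsOn (· ∈ E j) D) : DependsOn (· ∈ ⋂ j ∈ J, (E j)ᶜ) D := fun x y h => by
  simp only [Set.mem_iInter₂, Set.mem_compl_iff]
  exact propext (forall₂_congr fun j hj => not_congr (Iff.of_eq (hE j hj h)))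

end DependsOn

section UniformOn

variable {Ω : Type*} [MeasurableSpace Ω] [MeasurableSingletonClass Ω] [Finite Ω]

lemma uniformOn_univ_real (s : Set Ω) :
    (uniformOn (Set.univ : Set Ω)).real s = Nat.card s / Nat.card Ω := by
  have := Fintype.ofFinite Ω
  simp [Measure.real, uniformOn_univ, Measure.count_apply_finite s (Set.toFinite s),
    Set.ncard_eq_toFinset_card s]

end UniformOn

lemma uniformOn_univ_real_inter_of_dependsOn {ι : Type*} {β : ι → Type*} [Finite ι]
    [∀ i, Finite (β i)] [MeasurableSpace (Π i, β i)] [MeasurableSingletonClass (Π i, β i)]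
    {D : Set ι} {E F : Set (Π i, β i)} (hE : DependsOn (· ∈ E) D) (hF : DependsOn (· ∈ F) Dᶜ) :
    (uniformOn Set.univ).real (E ∩ F) =
      (uniformOn Set.univ).real E * (uniformOn Set.univ).real F := by
  have h := card_inter_mul_card_eq_of_dependsOn hE hF
  simp only [uniformOn_univ_real]
  rcases eq_or_ne (Nat.card (Π i, β i) : ℝ) 0 with h0 | h0
  · simp [h0]
  · rw [div_mul_div_comm, eq_div_iff (mul_ne_zero h0 h0), ← mul_assoc, div_mul_cancel₀ _ h0]
    exact_mod_cast h

lemma card_filter_mem_le {α : Type*} [Fintype α] [DecidableEq α] (t : ℕ) (a : α) :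
    #{C : {C : Finset α // #C = t} | a ∈ C.1} ≤ (Fintype.card α).choose (t - 1) := by
  rw [← card_univ, ← card_powersetCard]
  refine card_le_card_of_injOn (fun C => C.1.erase a) (fun C hC => ?_) fun C hC C' hC' h => ?_
  · simp only [coe_filter, mem_univ, true_and, Set.mem_ofPred_eq] at hC
    simp [card_erase_of_mem hC, C.2]
  · simp only [coe_filter, mem_univ, true_and, Set.mem_ofPred_eq] at hC hC'
    have h : C.1.erase a = C'.1.erase a := h
    exact Subtype.ext (by rw [← insert_erase hC, h, insert_erase hC'])

lemma card_filter_inter_nonempty_le {α : Type*} [Fintype α] [DecidableEq α] (t : ℕ)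
    (C : Finset α) :
    #{C' : {C' : Finset α // #C' = t} | (C'.1 ∩ C).Nonempty} ≤
      #C * (Fintype.card α).choose (t - 1) := by
  calc #{C' : {C' : Finset α // #C' = t} | (C'.1 ∩ C).Nonempty}
      ≤ #(C.biUnion fun a => {C' : {C' : Finset α // #C' = t} | a ∈ C'.1}) := by
        refine card_le_card fun C' hC' => ?_
        obtain ⟨a, ha⟩ := (mem_filter.1 hC').2
        exact mem_biUnion.2 ⟨a, (mem_inter.1 ha).2, mem_filter.2 ⟨mem_univ _, (mem_inter.1 ha).1⟩⟩
    _ ≤ ∑ a ∈ C, #{C' : {C' : Finset α // #C' = t} | a ∈ C'.1} := card_biUnion_le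
    _ ≤ #C * (Fintype.card α).choose (t - 1) :=
        sum_le_card_nsmul _ _ _ fun a _ => card_filter_mem_le t a

lemma coverCount_eq_card_image {N k v : ℕ} (A : Fin N → Fin k → Fin v) (C : Finset (Fin k)) :
    coverCount A C = #(univ.image fun i (j : C) => A i j) := by
  classical
  rw [coverCount, ← Set.toFinset_range, ← Nat.card_eq_card_toFinset]
  rfl

section CoveringArray

variable {k v t m N : ℕ}

/- Arrays are stored column by column, `ω j i` being the entry in row `i` and column `j`, so that
"depends only on the columns in `D`" is `DependsOn`. -/
abbrev BadIndex (k v t m : ℕ) : Type :=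
  Σ C : {C : Finset (Fin k) // #C = t}, {S : Finset (C.1 → Fin v) // #S = m - 1}

def badEvent (N : ℕ) (q : BadIndex k v t m) : Set (Fin k → Fin N → Fin v) :=
  {ω | ∀ i, (fun j : q.1.1 => ω j i) ∈ q.2.1}

lemma dependsOn_mem_badEvent (q : BadIndex k v t m) :
    DependsOn (· ∈ badEvent N q) (q.1.1 : Set (Fin k)) := fun ω ω' h => by
  have hrow (i : Fin N) : (fun j : q.1.1 => ω j i) = fun j : q.1.1 => ω' j i :=
    funext fun j => congrFun (h j (Finset.mem_coe.2 j.2)) i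
  simp only [badEvent, Set.mem_ofPred_eq, hrow]

lemma card_badEvent (q : BadIndex k v t m) :
    Nat.card (badEvent N q) = ((m - 1) * v ^ (k - t)) ^ N := by
  classical
  obtain ⟨⟨C, hC⟩, S, hS⟩ := q
  let R : Set (Fin k → Fin v) := {f | (fun j : C => f j) ∈ S}
  have hR : Nat.card R = (m - 1) * v ^ (k - t) := by
    let e : R ≃ S × ({j // j ∉ C} → Fin v) :=
      (Equiv.subtypeEquiv (p := (· ∈ R)) (q := fun s => s.1 ∈ S)
        (Equiv.piEquivPiSubtypeProd (· ∈ C) fun _ => Fin v) fun _ => Iff.rfl).trans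
        Equiv.prodSubtypeFstEquivSubtypeProd
    rw [Nat.card_congr e, Nat.card_prod]
    simp [hS, hC]
  let e : badEvent N ⟨⟨C, hC⟩, S, hS⟩ ≃ (Fin N → R) :=
    (Equiv.subtypeEquiv (p := (· ∈ badEvent N _)) (q := fun A => ∀ i, A i ∈ R)
      (Equiv.piComm _) fun _ => Iff.rfl).trans Equiv.subtypePiEquivPi
  rw [Nat.card_congr e, Nat.card_fun, hR, Nat.card_eq_fintype_card, Fintype.card_fin]

lemma uniformOn_univ_real_badEvent [NeZero v] (q : BadIndex k v t m) :
    (uniformOn Set.univ).real (badEvent N q) = (((m - 1 : ℕ) : ℝ) / (v : ℝ) ^ t) ^ N := by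
  have htk : t ≤ k := q.1.2 ▸ (card_le_univ q.1.1).trans_eq (Fintype.card_fin k)
  have hv : (v : ℝ) ≠ 0 := NeZero.ne _
  rw [uniformOn_univ_real, card_badEvent]
  simp only [Nat.card_eq_fintype_card, Fintype.card_fun, Fintype.card_fin]
  push_cast
  have hvk : (v : ℝ) ^ k = v ^ (k - t) * v ^ t := by rw [← pow_add, Nat.sub_add_cancel htk]
  rw [← pow_mul, mul_comm N k, pow_mul, ← div_pow, hvk]
  field_simp

def neighbors (q : BadIndex k v t m) : Finset (BadIndex k v t m) :=
  ((univ.filter fun C : {C : Finset (Fin k) // #C = t} => (C.1 ∩ q.1.1).Nonempty).sigma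
    fun _ => univ).erase q

lemma mem_neighbors {q q' : BadIndex k v t m} :
    q' ∈ neighbors q ↔ q' ≠ q ∧ (q'.1.1 ∩ q.1.1).Nonempty := by
  simp [neighbors]

lemma card_neighbors_le (ht : 0 < t) (q : BadIndex k v t m) :
    #(neighbors q) ≤ t * k.choose (t - 1) * (v ^ t).choose (m - 1) - 1 := by
  unfold neighbors
  set T := (univ : Finset {C : Finset (Fin k) // #C = t}).filter fun C => (C.1 ∩ q.1.1).Nonempty
  have hq : q ∈ T.sigma fun _ => univ := by
    refine mem_sigma.2 ⟨mem_filter.2 ⟨mem_univ _, ?_⟩, mem_univ _⟩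
    rw [inter_self, ← card_pos, q.1.2]
    exact ht
  rw [card_erase_of_mem hq, card_sigma]
  refine Nat.sub_le_sub_right ?_ 1
  have hS (C : {C : Finset (Fin k) // #C = t}) :
      #(univ : Finset {S : Finset (C.1 → Fin v) // #S = m - 1}) = (v ^ t).choose (m - 1) := by
    simp [C.2]
  simp only [hS, sum_const, smul_eq_mul]
  gcongr
  simpa [q.1.2] using card_filter_inter_nonempty_le t q.1.1

lemma uniformOn_univ_real_badEvent_inter {q : BadIndex k v t m} {J : Finset (BadIndex k v t m)}
    (hq : q ∉ J) (hJ : Disjoint J (neighbors q)) :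
    (uniformOn Set.univ).real (badEvent N q ∩ ⋂ j ∈ J, (badEvent N j)ᶜ) =
      (uniformOn Set.univ).real (badEvent N q) *
        (uniformOn Set.univ).real (⋂ j ∈ J, (badEvent N j)ᶜ) := by
  refine uniformOn_univ_real_inter_of_dependsOn (dependsOn_mem_badEvent q)
    (dependsOn_mem_biInter_compl fun q' hq' => (dependsOn_mem_badEvent q').mono ?_)
  have : ¬ (q'.1.1 ∩ q.1.1).Nonempty := fun h =>
    disjoint_left.1 hJ hq' (mem_neighbors.2 ⟨ne_of_mem_of_not_mem hq' hq, h⟩)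
  rw [Set.subset_compl_iff_disjoint_right, disjoint_coe, disjoint_iff_inter_eq_empty]
  exact not_nonempty_iff_eq_empty.1 this

lemma exists_mem_badEvent_of_coverCount_lt (ω : Fin k → Fin N → Fin v) {C : Finset (Fin k)}
    (hC : #C = t) (hm : m - 1 ≤ v ^ t) (h : coverCount (fun i j => ω j i) C < m) :
    ∃ q : BadIndex k v t m, ω ∈ badEvent N q := by
  classical
  rw [coverCount_eq_card_image] at h
  obtain ⟨S, hRS, -, hS⟩ := exists_subsuperset_card_eq (subset_univ _) (Nat.le_sub_one_of_lt h)
    (by simpa [hC] using hm)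
  exact ⟨⟨⟨C, hC⟩, S, hS⟩, fun i => hRS (mem_image_of_mem _ (mem_univ i))⟩

end CoveringArray

lemma exp_one_mul_inv_pow_mul_le_one {x D : ℝ} {N : ℕ} (hx : 1 < x) (hD : 0 < D)
    (h : (1 + Real.log D) / Real.log x ≤ N) : Real.exp 1 * x⁻¹ ^ N * D ≤ 1 := by
  have hlog : 0 < Real.log x := Real.log_pos hx
  have : Real.exp 1 * D ≤ x ^ N := by
    rw [← Real.exp_log hD, ← Real.exp_add, ← Real.exp_log (pow_pos (by linarith) N), Real.log_pow]
    exact Real.exp_le_exp.2 (by rwa [div_le_iff₀ hlog] at h)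
  rw [inv_pow, mul_right_comm, ← div_eq_mul_inv, div_le_one (by positivity)]
  exact this

theorem stmt_1 (t k v m N : ℕ) (ht : 2 ≤ t) (hv : 2 ≤ v) (hk : 2 * t ≤ k)
    (hm1 : 2 ≤ m) (hm2 : m ≤ v ^ t)
    (hN : (1 + Real.log ((t : ℝ) * (k.choose (t - 1) : ℝ) * ((v ^ t).choose (m - 1) : ℝ))) /
        Real.log ((v : ℝ) ^ t / ((m : ℝ) - 1)) ≤ (N : ℝ)) :
    ∃ A : Fin N → Fin k → Fin v,
      ∀ C : Finset (Fin k), C.card = t → m ≤ coverCount A C := by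
  have : NeZero v := ⟨by omega⟩
  set D := t * k.choose (t - 1) * (v ^ t).choose (m - 1)
  have hD : 2 ≤ D := by
    have hk₁ : 0 < k.choose (t - 1) := Nat.choose_pos (by omega)
    have hv₁ : 0 < (v ^ t).choose (m - 1) := Nat.choose_pos (by omega)
    calc 2 ≤ t * 1 * 1 := by omega
      _ ≤ D := Nat.mul_le_mul (Nat.mul_le_mul_left t hk₁) hv₁
  have hx : 1 < (v : ℝ) ^ t / ((m : ℝ) - 1) := by
    have : (m : ℝ) ≤ (v : ℝ) ^ t := by exact_mod_cast hm2
    rw [one_lt_div (by norm_num; omega)]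
    linarith
  have hpd : Real.exp 1 * (((m - 1 : ℕ) : ℝ) / (v : ℝ) ^ t) ^ N * ((D - 1 : ℕ) + 1) ≤ 1 := by
    have hD' : ((D - 1 : ℕ) : ℝ) + 1 = (t : ℝ) * k.choose (t - 1) * (v ^ t).choose (m - 1) := by
      rw [Nat.cast_sub (by omega)]
      push_cast [D]
      ring
    rw [Nat.cast_sub (by omega), hD', ← inv_div, Nat.cast_one]
    exact exp_one_mul_inv_pow_mul_le_one hx (by rw [← hD']; positivity) hN
  obtain ⟨ω, hω⟩ := exists_forall_notMem_of_symmetric_lovasz (μ := uniformOn Set.univ)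
    (A := badEvent N) neighbors (fun _ => .of_discrete) (by omega)
    (card_neighbors_le (by omega)) (fun q => (uniformOn_univ_real_badEvent q).le) hpd
    fun _ _ => uniformOn_univ_real_badEvent_inter
  refine ⟨fun i j => ω j i, fun C hC => ?_⟩
  by_contra! h
  obtain ⟨q, hq⟩ := exists_mem_badEvent_of_coverCount_lt ω hC (by omega) h
  exact hω q hq
end

section
/- For integers t, k, v with t ≥ 2, v ≥ 2, k ≥ 2t and v(t−1) ≤ v^t − 1, there exists a partial m-covering array PCA(N; t, k, v, m) with m = v^t − v(t−1) + 1 and N ≤ (v^(t−1)/(t−1))·(1 + ln(t·C(k,t−1)·C(v^t, v(t−1)))); in particular, for fixed t and v such an array exists with N = O(v^(t−1)·ln k) rows, matching the order of the lower bound for covering arrays. -/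
open Finset Real

section LocalLemma

variable {Ω ι : Type*} [Fintype Ω] [DecidableEq Ω]

def avoidSet (E : ι → Finset Ω) (T : Finset ι) : Finset Ω :=
  univ \ T.biUnion E

lemma avoidSet_anti (E : ι → Finset Ω) {T T' : Finset ι} (h : T ⊆ T') :
    avoidSet E T' ⊆ avoidSet E T :=
  sdiff_subset_sdiff subset_rfl (biUnion_subset_biUnion_of_subset_left E h)

lemma mem_avoidSet {E : ι → Finset Ω} {T : Finset ι} {ω : Ω} :
    ω ∈ avoidSet E T ↔ ∀ a ∈ T, ω ∉ E a := by
  simp [avoidSet]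

variable [DecidableEq ι]

lemma avoidSet_insert (E : ι → Finset Ω) (b : ι) (T : Finset ι) :
    avoidSet E (insert b T) = avoidSet E T \ E b := by
  ext ω
  simp only [avoidSet, biUnion_insert, mem_sdiff, mem_univ, mem_union, true_and]
  tauto

lemma one_sub_mul_card_avoidSet_le_insert (E : ι → Finset Ω) {x : ℝ} {b : ι} {U : Finset ι}
    (hb : (#(E b ∩ avoidSet E U) : ℝ) ≤ x * #(avoidSet E U)) :
    (1 - x) * #(avoidSet E U) ≤ #(avoidSet E (insert b U)) := by
  rw [avoidSet_insert, card_sdiff, Nat.cast_sub (card_le_card inter_subset_right)]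
  linarith

lemma one_sub_pow_mul_card_avoidSet_le_union (E : ι → Finset Ω) {x : ℝ} (hx : x ≤ 1)
    {U V : Finset ι} (hUV : Disjoint U V)
    (h : ∀ W ⊂ U ∪ V, ∀ b, (#(E b ∩ avoidSet E W) : ℝ) ≤ x * #(avoidSet E W)) :
    (1 - x) ^ #V * #(avoidSet E U) ≤ #(avoidSet E (U ∪ V)) := by
  induction V using Finset.induction_on with
  | empty => simp
  | @insert b V hbV ih =>
    have hbU : b ∉ U := fun hb => disjoint_left.mp hUV hb (mem_insert_self b V)
    have hUV' : Disjoint U V := disjoint_of_subset_right (subset_insert b V) hUV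
    have hW : U ∪ V ⊂ U ∪ insert b V := by
      rw [union_insert]
      exact ssubset_insert (by simp [hbU, hbV])
    calc (1 - x) ^ #(insert b V) * #(avoidSet E U)
        = (1 - x) * ((1 - x) ^ #V * #(avoidSet E U)) := by rw [card_insert_of_notMem hbV]; ring
      _ ≤ (1 - x) * #(avoidSet E (U ∪ V)) :=
          mul_le_mul_of_nonneg_left (ih hUV' fun W hW' => h W (hW'.trans hW)) (by linarith)
      _ ≤ #(avoidSet E (U ∪ insert b V)) := by
          rw [union_insert]
          exact one_sub_mul_card_avoidSet_le_insert E (h _ hW b)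

/-- Symmetric Lovász local lemma for the uniform measure on `Ω`, in conditional form: given that
no event of `T` occurs, `E a` has probability at most `x`. -/
theorem card_inter_avoidSet_le [Nonempty Ω] (E : ι → Finset Ω) (Γ : ι → Finset ι) {x : ℝ} {D : ℕ}
    (hx0 : 0 ≤ x) (hx1 : x ≤ 1) (hΓ : ∀ a, #(Γ a) ≤ D)
    (hE : ∀ a, (#(E a) : ℝ) ≤ x * (1 - x) ^ D * Fintype.card Ω)
    (hind : ∀ a T, Disjoint T (Γ a) →
      #(E a ∩ avoidSet E T) * Fintype.card Ω = #(E a) * #(avoidSet E T))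
    (T : Finset ι) (a : ι) : (#(E a ∩ avoidSet E T) : ℝ) ≤ x * #(avoidSet E T) := by
  induction T using Finset.strongInduction generalizing a with
  | _ T ih =>
  have hΩ : (0 : ℝ) < Fintype.card Ω := by exact_mod_cast Fintype.card_pos
  set T₁ := T ∩ Γ a
  set T₂ := T \ Γ a
  have hfar : (#(E a ∩ avoidSet E T₂) : ℝ) ≤ x * (1 - x) ^ D * #(avoidSet E T₂) := by
    have h := hind a T₂ sdiff_disjoint
    rw [← mul_le_mul_iff_of_pos_right hΩ]
    calc (#(E a ∩ avoidSet E T₂) : ℝ) * Fintype.card Ω = #(E a) * #(avoidSet E T₂) := by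
          exact_mod_cast h
      _ ≤ x * (1 - x) ^ D * Fintype.card Ω * #(avoidSet E T₂) :=
          mul_le_mul_of_nonneg_right (hE a) (Nat.cast_nonneg _)
      _ = _ := by ring
  have hnear : (1 - x) ^ #T₁ * (#(avoidSet E T₂) : ℝ) ≤ #(avoidSet E T) := by
    have h := one_sub_pow_mul_card_avoidSet_le_union E hx1 (disjoint_sdiff_inter T (Γ a))
      (by rw [sdiff_union_inter]; exact fun W hW b => ih W hW b)
    rwa [sdiff_union_inter] at h
  have hpow : (1 - x) ^ D ≤ (1 - x) ^ #T₁ :=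
    pow_le_pow_of_le_one (by linarith) (by linarith)
      ((card_le_card inter_subset_right).trans (hΓ a))
  calc (#(E a ∩ avoidSet E T) : ℝ) ≤ #(E a ∩ avoidSet E T₂) := by
        exact_mod_cast card_le_card (inter_subset_inter_left (avoidSet_anti E sdiff_subset))
    _ ≤ x * (1 - x) ^ D * #(avoidSet E T₂) := hfar
    _ ≤ x * ((1 - x) ^ #T₁ * #(avoidSet E T₂)) := by
        rw [← mul_assoc]; gcongr
    _ ≤ x * #(avoidSet E T) := mul_le_mul_of_nonneg_left hnear hx0

theorem exists_forall_notMem_of_lovasz_s7 [Nonempty Ω] [Fintype ι] (E : ι → Finset Ω)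
    (Γ : ι → Finset ι) {x : ℝ} {D : ℕ} (hx0 : 0 ≤ x) (hx1 : x < 1) (hΓ : ∀ a, #(Γ a) ≤ D)
    (hE : ∀ a, (#(E a) : ℝ) ≤ x * (1 - x) ^ D * Fintype.card Ω)
    (hind : ∀ a T, Disjoint T (Γ a) →
      #(E a ∩ avoidSet E T) * Fintype.card Ω = #(E a) * #(avoidSet E T)) :
    ∃ ω, ∀ a, ω ∉ E a := by
  have h := one_sub_pow_mul_card_avoidSet_le_union E hx1.le (disjoint_empty_left univ)
    fun W _ b => card_inter_avoidSet_le E Γ hx0 hx1.le hΓ hE hind W b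
  have hpos : (0 : ℝ) < #(avoidSet E (∅ ∪ univ)) := by
    refine lt_of_lt_of_le ?_ h
    have : (0 : ℝ) < #(avoidSet E ∅) := by simp [avoidSet, Fintype.card_pos]
    positivity
  obtain ⟨ω, hω⟩ := card_pos.mp (by exact_mod_cast hpos)
  exact ⟨ω, fun a => mem_avoidSet.mp hω a (by simp)⟩

end LocalLemma

section Cylinder

variable {κ β : Type*} [Fintype κ] [DecidableEq κ] [Fintype β]

/-- The involution `(ω, ω') ↦ (ω on C and ω' off C, ω' on C and ω off C)` matches `A × B` with
`(A ∩ B) × (κ → β)`. -/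
theorem card_inter_mul_card_eq_of_dependsOn_s7 [DecidableEq β] (C : Finset κ) {A B : Finset (κ → β)}
    (hA : ∀ ω ω', (∀ j ∈ C, ω j = ω' j) → ω ∈ A → ω' ∈ A)
    (hB : ∀ ω ω', (∀ j ∉ C, ω j = ω' j) → ω ∈ B → ω' ∈ B) :
    #(A ∩ B) * Fintype.card (κ → β) = #A * #B := by
  let swap : (κ → β) × (κ → β) → (κ → β) × (κ → β) := fun p =>
    (C.piecewise p.1 p.2, C.piecewise p.2 p.1)
  have hswap : ∀ p, swap (swap p) = p := by
    rintro ⟨ω, ω'⟩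
    ext j <;> by_cases hj : j ∈ C <;> simp [swap, hj]
  rw [← card_univ, ← card_product, ← card_product]
  refine card_nbij' swap swap ?_ ?_ (fun p _ => hswap p) (fun p _ => hswap p)
  · rintro ⟨ω, ω'⟩ h
    simp only [coe_product, Set.mem_prod, mem_coe, mem_inter, mem_univ, and_true] at h ⊢
    exact ⟨hA ω _ (fun j hj => by simp [swap, hj]) h.1,
      hB ω _ (fun j hj => by simp [swap, hj]) h.2⟩
  · rintro ⟨ω, ω'⟩ h
    simp only [coe_product, Set.mem_prod, mem_coe, mem_inter, mem_univ, and_true] at h ⊢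
    exact ⟨hA ω _ (fun j hj => by simp [swap, hj]) h.1,
      hB ω' _ (fun j hj => by simp [swap, hj]) h.2⟩

theorem card_filter_restrict (C : Finset κ) (P : (C → β) → Prop) [DecidablePred P] :
    #(univ.filter fun ω : κ → β => P fun j => ω j) =
      #(univ.filter P) * Fintype.card β ^ (Fintype.card κ - #C) := by
  let e : {ω : κ → β // P fun j => ω j} ≃ {g : C → β // P g} × ({j // j ∉ C} → β) :=
    ((Equiv.piEquivPiSubtypeProd (· ∈ C) fun _ => β).subtypeEquiv fun _ => Iff.rfl).trans
      Equiv.prodSubtypeFstEquivSubtypeProd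
  rw [← Fintype.card_subtype, ← Fintype.card_subtype, Fintype.card_congr e, Fintype.card_prod,
    Fintype.card_fun, Fintype.card_subtype_compl, Fintype.card_coe]

theorem card_filter_forall_notMem {γ ι α : Type*} [Fintype γ] [DecidableEq γ] [Fintype ι]
    [DecidableEq ι] [Fintype α] [DecidableEq α] (S : Finset (γ → α))
    [DecidablePred fun g : γ → ι → α => ∀ i, (fun j => g j i) ∉ S] :
    #(univ.filter fun g : γ → ι → α => ∀ i, (fun j => g j i) ∉ S) =
      (Fintype.card α ^ Fintype.card γ - #S) ^ Fintype.card ι := by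
  let e : {g : γ → ι → α // ∀ i, (fun j => g j i) ∉ S} ≃ (ι → {y : γ → α // y ∉ S}) :=
    ((Equiv.piComm fun (_ : γ) (_ : ι) => α).subtypeEquiv fun _ => Iff.rfl).trans
      (Equiv.subtypePiEquivPi (p := fun _ y => y ∉ S))
  rw [← Fintype.card_subtype, Fintype.card_congr e, Fintype.card_fun,
    Fintype.card_subtype_compl, Fintype.card_coe, Fintype.card_fun]

end Cylinder

theorem log_one_sub_le_neg_add_sq_div_two {c : ℝ} (hc0 : 0 ≤ c) (hc1 : c < 1) :
    log (1 - c) ≤ -(c + c ^ 2 / 2) := by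
  have h := hasSum_pow_div_log_of_abs_lt_one (by rwa [abs_of_nonneg hc0])
  have := sum_le_hasSum (range 2) (fun n _ => by positivity) h
  norm_num [sum_range_succ] at this
  linarith

theorem log_add_one_le_log_add_inv {M : ℝ} (hM : 0 < M) : log (M + 1) ≤ log M + M⁻¹ := by
  have h : M + 1 = M * (1 + M⁻¹) := by field_simp
  rw [h, log_mul hM.ne' (by positivity)]
  have := log_le_sub_one_of_pos (show 0 < 1 + M⁻¹ by positivity)
  linarith

/-- `N` may fall short of `(1 + log M) / c` by one; the second-order term `c ^ 2 / 2` of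
`-log (1 - c)` pays for that. -/
theorem exp_one_mul_add_one_mul_one_sub_pow_le_one {c M : ℝ} {N : ℕ} (hc0 : 0 < c)
    (hc : c ≤ 1 / 2) (hM : 16 ≤ M) (hcM : 2 ≤ c * M) (hN : (1 + log M) / c - 1 ≤ N) :
    exp 1 * (M + 1) * (1 - c) ^ N ≤ 1 := by
  have hM0 : 0 < M := by linarith
  have hlogM : 5 / 2 ≤ log M := by
    have h16 : log 16 = 4 * log 2 := by
      rw [show (16 : ℝ) = 2 ^ 4 by norm_num, log_pow]; norm_num
    have := log_le_log (by norm_num) hM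
    linarith [log_two_gt_d9]
  have hinv : M⁻¹ ≤ c / 2 := by
    rw [inv_le_iff_one_le_mul₀ hM0]; linarith
  have hNc : 1 + log M ≤ (N + 1) * c := by
    rw [div_sub_one hc0.ne', div_le_iff₀ hc0] at hN; linarith
  have hkey : 1 + log (M + 1) ≤ -(N * log (1 - c)) := by
    have h1 := log_add_one_le_log_add_inv hM0
    have h2 := log_one_sub_le_neg_add_sq_div_two hc0.le (by linarith)
    have hN0 : (0 : ℝ) ≤ N := N.cast_nonneg
    nlinarith [mul_le_mul_of_nonneg_left h2 hN0,
      mul_nonneg hc0.le (by linarith : 0 ≤ log M - 2 - c)]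
  rw [← exp_log (by linarith : 0 < M + 1), ← exp_log (by linarith : 0 < 1 - c), ← exp_nat_mul,
    ← exp_add, ← exp_add, exp_le_one_iff]
  linarith

theorem le_inv_mul_one_sub_inv_pow {M : ℕ} {q : ℝ} (hM : 0 < M) (hq : 0 ≤ q)
    (h : exp 1 * (M + 1) * q ≤ 1) :
    q ≤ ((M : ℝ) + 1)⁻¹ * (1 - ((M : ℝ) + 1)⁻¹) ^ M := by
  have hM0 : (0 : ℝ) < M := by exact_mod_cast hM
  have hinv : (1 - ((M : ℝ) + 1)⁻¹) ^ M = ((1 + (M : ℝ)⁻¹) ^ M)⁻¹ := by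
    rw [← inv_pow]
    congr 1
    field_simp
    ring
  rw [hinv, ← mul_inv, ← one_div, le_div_iff₀ (by positivity)]
  calc q * ((M + 1) * (1 + (M : ℝ)⁻¹) ^ M) ≤ q * ((M + 1) * exp 1) := by
        gcongr
        exact one_add_inv_pow_le_exp
    _ ≤ 1 := by linarith

theorem exp_one_mul_add_one_mul_one_sub_div_pow_le_one {d n M N : ℕ} (hd : 2 ≤ d)
    (h2d : 2 * d ≤ n) (hM : 4 * n ≤ M) (hN : (1 + log M) / (d / n) - 1 ≤ N) :
    exp 1 * (M + 1) * (1 - d / n : ℝ) ^ N ≤ 1 := by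
  have hn : (0 : ℝ) < n := by exact_mod_cast (by omega : 0 < n)
  refine exp_one_mul_add_one_mul_one_sub_pow_le_one (by positivity) ?_
    (by exact_mod_cast (by omega : 16 ≤ M)) ?_ hN
  · have : (2 * d : ℝ) ≤ n := by exact_mod_cast h2d
    rw [div_le_iff₀ hn]
    linarith
  · have : (2 * n : ℝ) ≤ d * M := by exact_mod_cast (by nlinarith : 2 * n ≤ d * M)
    rw [div_mul_eq_mul_div, le_div_iff₀ hn]
    linarith

theorem pow_sub_one_div_sub_one_eq_cast_div {t v : ℕ} (ht : 1 ≤ t) (hv : v ≠ 0) :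
    (v : ℝ) ^ (t - 1) / ((t : ℝ) - 1) = ((v ^ t : ℕ) : ℝ) / ((v * (t - 1) : ℕ) : ℝ) := by
  have hvt : (v : ℝ) ^ t = v * v ^ (t - 1) := (mul_pow_sub_one (by omega) _).symm
  rw [Nat.cast_pow, Nat.cast_mul, Nat.cast_sub ht, Nat.cast_one, hvt,
    mul_div_mul_left _ _ (by exact_mod_cast hv)]

theorem le_choose_of_pos_of_lt {n r : ℕ} (hr : 0 < r) (hrn : r < n) : n ≤ n.choose r := by
  induction n generalizing r with
  | zero => omega
  | succ n ih =>
    obtain ⟨r, rfl⟩ : ∃ r', r = r' + 1 := ⟨r - 1, by omega⟩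
    rcases Nat.eq_zero_or_pos r with rfl | hr0
    · simp
    · rw [Nat.choose_succ_succ']
      have := ih hr0 (by omega)
      have := Nat.choose_pos (n := n) (k := r + 1) (by omega)
      omega

theorem two_mul_mul_sub_one_le_pow {v : ℕ} (hv : 2 ≤ v) (t : ℕ) : 2 * (v * (t - 1)) ≤ v ^ t := by
  cases t with
  | zero => simp
  | succ t =>
    calc 2 * (v * (t + 1 - 1)) = v * (2 * t) := by rw [Nat.add_sub_cancel]; ring
      _ ≤ v * v ^ t := Nat.mul_le_mul_left v ((Nat.mul_le_pow (by norm_num) t).trans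
          (Nat.pow_le_pow_left hv t))
      _ = v ^ (t + 1) := (pow_succ' v t).symm

theorem pca_parameter_bounds {t k v : ℕ} (ht : 2 ≤ t) (hv : 2 ≤ v) (hk : t < k) :
    2 ≤ v * (t - 1) ∧ 2 * (v * (t - 1)) ≤ v ^ t ∧
      4 * v ^ t ≤ t * k.choose (t - 1) * (v ^ t).choose (v * (t - 1)) := by
  have hd : 2 ≤ v * (t - 1) := Nat.mul_le_mul hv (by omega : 1 ≤ t - 1)
  have h2d := two_mul_mul_sub_one_le_pow hv t
  refine ⟨hd, h2d, ?_⟩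
  calc 4 * v ^ t = 2 * 2 * v ^ t := by ring
    _ ≤ t * k.choose (t - 1) * (v ^ t).choose (v * (t - 1)) :=
        Nat.mul_le_mul (Nat.mul_le_mul ht ((by omega : 2 ≤ k).trans
          (le_choose_of_pos_of_lt (by omega) (by omega))))
          (le_choose_of_pos_of_lt (by omega) (by omega))

theorem card_filter_not_disjoint_le {α : Type*} [Fintype α] [DecidableEq α] (C : Finset α)
    (r : ℕ) :
    #((powersetCard r univ).filter fun C' => ¬Disjoint C' C) ≤
      #C * (Fintype.card α).choose (r - 1) := by
  calc #((powersetCard r univ).filter fun C' => ¬Disjoint C' C)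
      ≤ #(C.biUnion fun j => (powersetCard (r - 1) univ).image (insert j)) := by
        refine card_le_card fun C' hC' => ?_
        obtain ⟨hC'r, hmeet⟩ := mem_filter.mp hC'
        obtain ⟨j, hjC', hjC⟩ := not_disjoint_iff.mp hmeet
        refine mem_biUnion.mpr ⟨j, hjC, mem_image.mpr ⟨C'.erase j, ?_, insert_erase hjC'⟩⟩
        rw [mem_powersetCard_univ, card_erase_of_mem hjC', (mem_powersetCard_univ.mp hC'r)]
    _ ≤ ∑ j ∈ C, #((powersetCard (r - 1) univ).image (insert j)) := card_biUnion_le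
    _ ≤ ∑ _j ∈ C, (Fintype.card α).choose (r - 1) := by
        refine sum_le_sum fun j _ => card_image_le.trans ?_
        rw [card_powersetCard, card_univ]
    _ = #C * (Fintype.card α).choose (r - 1) := by rw [sum_const, smul_eq_mul]

theorem sub_lt_coverCount {N k v d : ℕ} (A : Fin N → Fin k → Fin v) (C : Finset (Fin k))
    (hd : d ≤ v ^ #C) (h : ∀ S : Finset (C → Fin v), #S = d → ∃ i, (fun j : C => A i j) ∈ S) :
    v ^ #C - d < coverCount A C := by
  set R : Finset (C → Fin v) := univ.image fun i j => A i j
  have hR : coverCount A C = #R := by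
    rw [coverCount, Nat.card_eq_fintype_card, Fintype.card_subtype]
    congr 1
    ext x
    simp [R]
  by_contra! hle
  have hRc : d ≤ #Rᶜ := by
    rw [card_compl, Fintype.card_fun, Fintype.card_coe, Fintype.card_fin]
    omega
  obtain ⟨S, hSR, hS⟩ := exists_subset_card_eq hRc
  obtain ⟨i, hi⟩ := h S hS
  exact mem_compl.mp (hSR hi) (mem_image_of_mem _ (mem_univ i))

section PCA

/-- Index of a bad event: a set `C` of `t` columns and a set of `d` tuples on `C`. -/
abbrev TupleSet (t k v d : ℕ) :=
  {a : (C : Finset (Fin k)) × Finset (C → Fin v) // #a.1 = t ∧ #a.2 = d}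

variable {t k v d : ℕ}

/-- `ω j i` is the entry in row `i` and column `j`: storing the array by columns makes events on
disjoint column sets depend on disjoint coordinates. -/
def uncovered (N : ℕ) (a : TupleSet t k v d) : Finset (Fin k → Fin N → Fin v) :=
  univ.filter fun ω => ∀ i, (fun j : a.1.1 => ω j i) ∉ a.1.2

def meeting (a : TupleSet t k v d) : Finset (TupleSet t k v d) :=
  univ.filter fun b => ¬Disjoint b.1.1 a.1.1

theorem card_meeting_le (a : TupleSet t k v d) :
    #(meeting a) ≤ t * k.choose (t - 1) * (v ^ t).choose d := by
  set bad := (powersetCard t univ).filter fun C' : Finset (Fin k) => ¬Disjoint C' a.1.1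
  calc #(meeting a)
      ≤ #(bad.sigma fun C' => powersetCard d (univ : Finset (C' → Fin v))) := by
        refine card_le_card_of_injOn Subtype.val (fun b hb => ?_) Subtype.val_injective.injOn
        simp only [meeting, coe_filter, mem_univ, true_and, Set.mem_ofPred_eq] at hb
        simp [bad, hb, b.2.1, b.2.2]
    _ = #bad * (v ^ t).choose d := by
        refine (card_sigma _ _).trans (sum_const_nat fun C' hC' => ?_)
        rw [card_powersetCard, card_univ, Fintype.card_fun, Fintype.card_coe, Fintype.card_fin,
          mem_powersetCard_univ.mp (mem_filter.mp hC').1]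
    _ ≤ t * k.choose (t - 1) * (v ^ t).choose d := by
        gcongr
        simpa [a.2.1] using card_filter_not_disjoint_le a.1.1 t

theorem uncovered_congr {N : ℕ} (a : TupleSet t k v d) {ω ω' : Fin k → Fin N → Fin v}
    (h : ∀ j ∈ a.1.1, ω j = ω' j) : ω ∈ uncovered N a ↔ ω' ∈ uncovered N a := by
  have hrestrict : ∀ i, (fun j : a.1.1 => ω j i) = fun j : a.1.1 => ω' j i :=
    fun i => funext fun j => by rw [h j j.2]
  simp only [uncovered, mem_filter, mem_univ, true_and, hrestrict]

theorem card_uncovered (N : ℕ) (a : TupleSet t k v d) :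
    #(uncovered N a) = (v ^ t - d) ^ N * (v ^ N) ^ (k - t) := by
  rw [uncovered,
    card_filter_restrict a.1.1 fun g : a.1.1 → Fin N → Fin v => ∀ i, (fun j => g j i) ∉ a.1.2,
    card_filter_forall_notMem]
  simp [a.2.1, a.2.2]

theorem exists_forall_notMem_uncovered {N : ℕ} (hv : 0 < v) (hd : d ≤ v ^ t)
    (hM : 0 < t * k.choose (t - 1) * (v ^ t).choose d)
    (h : exp 1 * ((t * k.choose (t - 1) * (v ^ t).choose d : ℕ) + 1) *
      (1 - d / (v ^ t : ℕ) : ℝ) ^ N ≤ 1) :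
    ∃ ω : Fin k → Fin N → Fin v, ∀ a : TupleSet t k v d, ω ∉ uncovered N a := by
  have : Nonempty (Fin v) := ⟨⟨0, hv⟩⟩
  set M := t * k.choose (t - 1) * (v ^ t).choose d
  have hM1 : (1 : ℝ) < M + 1 := by
    have : (0 : ℝ) < M := by exact_mod_cast hM
    linarith
  refine exists_forall_notMem_of_lovasz_s7 (uncovered N) meeting (D := M) (by positivity)
    (inv_lt_one_of_one_lt₀ hM1) card_meeting_le (fun a => ?_) (fun a T hT => ?_)
  · have htk : t ≤ k := by simpa [a.2.1] using card_le_univ a.1.1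
    have hc : (d / (v ^ t : ℕ) : ℝ) ≤ 1 := div_le_one_of_le₀ (by exact_mod_cast hd) (by positivity)
    have hq := le_inv_mul_one_sub_inv_pow hM (pow_nonneg (sub_nonneg.mpr hc) N) h
    calc (#(uncovered N a) : ℝ)
        = (1 - d / (v ^ t : ℕ) : ℝ) ^ N * Fintype.card (Fin k → Fin N → Fin v) := by
          have hn : (v : ℝ) ^ t ≠ 0 := by positivity
          simp only [card_uncovered, Fintype.card_fun, Fintype.card_fin, Nat.cast_pow]
          rw [← pow_sub_mul_pow _ htk, pow_right_comm, one_sub_div hn, div_pow]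
          push_cast [Nat.cast_sub hd]
          field_simp
          ring
      _ ≤ _ := by gcongr
  · refine card_inter_mul_card_eq_of_dependsOn_s7 a.1.1 (fun ω ω' h => (uncovered_congr a h).mp)
      fun ω ω' h hω => ?_
    rw [mem_avoidSet] at hω ⊢
    intro b hb
    have hdisj : Disjoint b.1.1 a.1.1 := by
      simpa [meeting] using disjoint_left.mp hT hb
    rw [← uncovered_congr b fun j hj => h j (disjoint_left.mp hdisj hj)]
    exact hω b hb

end PCA

theorem stmt_7_general (t k v : ℕ) (ht : 2 ≤ t) (hv : 2 ≤ v) (hk : 2 * t ≤ k) :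
    ∃ (N : ℕ) (A : Fin N → Fin k → Fin v),
      (∀ C : Finset (Fin k), C.card = t → v ^ t - v * (t - 1) + 1 ≤ coverCount A C) ∧
      (N : ℝ) ≤ ((v : ℝ) ^ (t - 1) / ((t : ℝ) - 1)) *
          (1 + Real.log ((t : ℝ) * (k.choose (t - 1) : ℝ) * ((v ^ t).choose (v * (t - 1)) : ℝ))) := by
  obtain ⟨hd, h2d, hM⟩ := pca_parameter_bounds ht hv (by omega : t < k)
  set d := v * (t - 1)
  set M := t * k.choose (t - 1) * (v ^ t).choose d
  set B := ((v : ℝ) ^ (t - 1) / ((t : ℝ) - 1)) *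
    (1 + Real.log ((t : ℝ) * (k.choose (t - 1) : ℝ) * ((v ^ t).choose d : ℝ)))
  have hB : B = (1 + log M) / (d / (v ^ t : ℕ)) := by
    rw [div_div_eq_mul_div, mul_div_assoc,
      ← pow_sub_one_div_sub_one_eq_cast_div (by omega) (by omega), mul_comm]
    simp [B, M]
  have hB0 : 0 ≤ B := hB ▸ by positivity
  obtain ⟨ω, hω⟩ := exists_forall_notMem_uncovered (N := ⌊B⌋₊) (by omega) (by omega) (by omega)
    (exp_one_mul_add_one_mul_one_sub_div_pow_le_one hd h2d hM
      (by rw [← hB]; linarith [Nat.lt_floor_add_one B]))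
  refine ⟨⌊B⌋₊, fun i j => ω j i, fun C hC => ?_, Nat.floor_le hB0⟩
  have hcov := sub_lt_coverCount (fun i j => ω j i) C (d := d) (by rw [hC]; omega)
    fun S hS => by simpa [uncovered] using hω ⟨⟨C, S⟩, hC, hS⟩
  rw [hC] at hcov
  omega

theorem stmt_7 (t k v : ℕ) (ht : 2 ≤ t) (hv : 2 ≤ v) (hk : 2 * t ≤ k)
    (h1 : v * (t - 1) ≤ v ^ t - 1) :
    ∃ (N : ℕ) (A : Fin N → Fin k → Fin v),
      (∀ C : Finset (Fin k), C.card = t → v ^ t - v * (t - 1) + 1 ≤ coverCount A C) ∧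
      (N : ℝ) ≤ ((v : ℝ) ^ (t - 1) / ((t : ℝ) - 1)) *
          (1 + Real.log ((t : ℝ) * (k.choose (t - 1) : ℝ) * ((v ^ t).choose (v * (t - 1)) : ℝ))) :=
  stmt_7_general t k v ht hv hk
end

section
/- Let N, k, t, v, m be natural numbers with k ≥ t ≥ 2, v ≥ 2 and 1 ≤ m ≤ v^t. The number of pairs (A, C), where A : Fin N → Fin k → Fin v is an array and C is a t-subset of columns such that the rows of A restricted to C take fewer than m distinct values, is at most C(k,t) · C(v^t, v^t − m + 1) · ((m−1) · v^(k−t))^N; equivalently, for a uniformly random array the expected number of t-subsets C covering fewer than m tuples is at most C(k,t) · C(v^t, v^t − m + 1) · ((m−1)/v^t)^N. -/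
private noncomputable def eqCol {k t : ℕ} (C : Finset (Fin k)) (hC : C.card = t) :
    Fin t ≃ ↥C :=
  (C.equivFin.trans (finCongr hC)).symm

private lemma aux_inj {β : Type*} {n : ℕ} (s₁ s₂ : Finset β) (hs : s₁ = s₂)
    (h₁ : s₁.card = n) (h₂ : s₂.card = n) (x : ↥s₁) (y : ↥s₂)
    (h : finCongr h₁ (s₁.equivFin x) = finCongr h₂ (s₂.equivFin y)) : (x : β) = (y : β) := by
  subst hs
  have hxy : x = y := s₁.equivFin.injective (by
    apply Fin.ext
    simpa using congrArg Fin.val h)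
  rw [hxy]

theorem stmt_11 (N k t v m : ℕ) (ht : 2 ≤ t) (htk : t ≤ k) (hv : 2 ≤ v)
    (hm1 : 1 ≤ m) (hm2 : m ≤ v ^ t) :
    Nat.card {p : (Fin N → Fin k → Fin v) × Finset (Fin k) //
        p.2.card = t ∧ coverCount p.1 p.2 < m} ≤
      k.choose t * (v ^ t).choose (v ^ t - m + 1) * ((m - 1) * v ^ (k - t)) ^ N := by
  classical
  set w := v ^ t with hw
  set r := w - m + 1 with hr
  have hcardα : Fintype.card (Fin t → Fin v) = w := by simp [hw]
  set Sub := {p : (Fin N → Fin k → Fin v) × Finset (Fin k) //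
        p.2.card = t ∧ coverCount p.1 p.2 < m} with hSub
  -- the rows restricted to the chosen columns, as tuples indexed by `Fin t`
  let g : Sub → Fin N → (Fin t → Fin v) := fun p i a => p.1.1 i (eqCol p.1.2 p.2.1 a)
  have hCov : ∀ p : Sub, (Finset.image (g p) Finset.univ).card < m := by
    intro p
    refine lt_of_le_of_lt ?_ p.2.2
    rw [coverCount, ← Fintype.card_coe, ← Nat.card_eq_fintype_card]
    have hinj : Function.Injective (fun y : ↥(Finset.image (g p) Finset.univ) =>
        (⟨fun j => y.1 ((eqCol p.1.2 p.2.1).symm j), by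
          obtain ⟨i, -, hgi⟩ := Finset.mem_image.mp y.2
          refine ⟨i, funext fun j => ?_⟩
          rw [← hgi]
          show p.1.1 i ↑j = g p i ((eqCol p.1.2 p.2.1).symm j)
          show p.1.1 i ↑j = p.1.1 i ↑(eqCol p.1.2 p.2.1 ((eqCol p.1.2 p.2.1).symm j))
          rw [Equiv.apply_symm_apply]⟩ :
        {x : ↥p.1.2 → Fin v // ∃ i : Fin N, (fun j : ↥p.1.2 => p.1.1 i j) = x})) := by
      intro y z hyz
      have h' := congrArg Subtype.val hyz
      apply Subtype.ext
      funext a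
      have h2 := congrFun h' ((eqCol p.1.2 p.2.1) a)
      simpa using h2
    exact Nat.card_le_card_of_injective _ hinj
  -- choose a set of `r` tuples avoided by every row
  have hex : ∀ p : Sub, ∃ S : Finset (Fin t → Fin v), S.card = r ∧ ∀ i, g p i ∉ S := by
    intro p
    have h2 : r ≤ (Finset.image (g p) Finset.univ)ᶜ.card := by
      rw [Finset.card_compl, hcardα]
      have := hCov p
      omega
    obtain ⟨S, hSsub, hScard⟩ := Finset.exists_subset_card_eq h2
    refine ⟨S, hScard, fun i hi => ?_⟩
    have hmem := hSsub hi
    rw [Finset.mem_compl] at hmem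
    exact hmem (Finset.mem_image_of_mem _ (Finset.mem_univ i))
  choose S hS1 hS2 using hex
  have hS3 : ∀ p, ((S p)ᶜ).card = m - 1 := by
    intro p
    rw [Finset.card_compl, hcardα, hS1 p]
    omega
  have hCc : ∀ p : Sub, (p.1.2)ᶜ.card = k - t := by
    intro p
    rw [Finset.card_compl, p.2.1]
    simp
  refine le_trans (Nat.card_le_card_of_injective (α := Sub)
    (β := {C : Finset (Fin k) // C.card = t} × {s : Finset (Fin t → Fin v) // s.card = r} ×
      (Fin N → Fin (m - 1) × (Fin (k - t) → Fin v)))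
    (fun p =>
      ⟨⟨p.1.2, p.2.1⟩, ⟨S p, hS1 p⟩, fun i =>
        ⟨finCongr (hS3 p) (((S p)ᶜ).equivFin ⟨g p i, Finset.mem_compl.mpr (hS2 p i)⟩),
         fun j => p.1.1 i (eqCol (p.1.2)ᶜ (hCc p) j)⟩⟩) ?_) ?_
  · -- injectivity
    intro p q hpq
    obtain ⟨⟨A₁, C₁⟩, hp⟩ := p
    obtain ⟨⟨A₂, C₂⟩, hq⟩ := q
    have hC : C₁ = C₂ := congrArg (fun x => x.1.1) hpq
    subst hC
    have hS : S ⟨(A₁, C₁), hp⟩ = S ⟨(A₂, C₁), hq⟩ :=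
      congrArg (fun x => (x.2.1 : {s : Finset (Fin t → Fin v) // s.card = r}).1) hpq
    suffices hA : A₁ = A₂ by subst hA; rfl
    funext i j
    have h3 := congrFun (congrArg (fun x => x.2.2) hpq) i
    have hidx := congrArg Prod.fst h3
    have hout := congrArg Prod.snd h3
    by_cases hj : j ∈ C₁
    · have hgg : g ⟨(A₁, C₁), hp⟩ i = g ⟨(A₂, C₁), hq⟩ i :=
        aux_inj _ _ (by rw [hS]) _ _ _ _ hidx
      have h1 : A₁ i j = g ⟨(A₁, C₁), hp⟩ i ((eqCol C₁ hp.1).symm ⟨j, hj⟩) := by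
        show A₁ i j = A₁ i ↑(eqCol C₁ hp.1 ((eqCol C₁ hp.1).symm ⟨j, hj⟩))
        rw [Equiv.apply_symm_apply]
      have h2 : A₂ i j = g ⟨(A₂, C₁), hq⟩ i ((eqCol C₁ hp.1).symm ⟨j, hj⟩) := by
        show A₂ i j = A₂ i ↑(eqCol C₁ hq.1 ((eqCol C₁ hq.1).symm ⟨j, hj⟩))
        rw [Equiv.apply_symm_apply]
      rw [h1, h2, hgg]
    · have hj' : j ∈ C₁ᶜ := Finset.mem_compl.mpr hj
      have hval := congrFun hout ((eqCol C₁ᶜ (hCc ⟨(A₁, C₁), hp⟩)).symm ⟨j, hj'⟩)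
      have h1 : A₁ i j = A₁ i ↑(eqCol C₁ᶜ (hCc ⟨(A₁, C₁), hp⟩)
          ((eqCol C₁ᶜ (hCc ⟨(A₁, C₁), hp⟩)).symm ⟨j, hj'⟩)) := by
        rw [Equiv.apply_symm_apply]
      have h2 : A₂ i j = A₂ i ↑(eqCol C₁ᶜ (hCc ⟨(A₂, C₁), hq⟩)
          ((eqCol C₁ᶜ (hCc ⟨(A₁, C₁), hp⟩)).symm ⟨j, hj'⟩)) := by
        show A₂ i j = A₂ i ↑(eqCol C₁ᶜ (hCc ⟨(A₂, C₁), hq⟩)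
          ((eqCol C₁ᶜ (hCc ⟨(A₂, C₁), hq⟩)).symm ⟨j, hj'⟩))
        rw [Equiv.apply_symm_apply]
      rw [h1, h2]
      exact hval
  · -- cardinality computation
    rw [Nat.card_eq_fintype_card]
    simp only [Fintype.card_prod, Fintype.card_fun, Fintype.card_finset_len,
      Fintype.card_fin, hcardα]
    exact le_of_eq (by ring)
end

section
/- Let F be a finite field with v elements and t ≥ 2 a natural number. Consider the affine (Frobenius) group action on t-tuples: for a ∈ F, a ≠ 0, and b ∈ F, the pair (a,b) sends a tuple x : Fin t → F to the tuple j ↦ a · x j + b. Then: (1) the set of constant tuples (those x with all coordinates equal) forms a single orbit of size v; (2) every non-constant tuple lies in an orbit of size exactly v(v−1); and (3) the number of orbits consisting of non-constant tuples is exactly (v^(t−1) − 1)/(v − 1). -/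
/-!
An affine map `z ↦ a z + b` with `a ≠ 0` that fixes two distinct points is the identity, so the
group of pairs `(a, b)` acts freely on nonconstant tuples and each of their orbits has `v (v - 1)`
elements. The `v ^ t - v` nonconstant tuples are partitioned into these orbits, which gives the
count `(v ^ t - v) / (v (v - 1)) = (v ^ (t - 1) - 1) / (v - 1)`.
-/

open Finset in
theorem Finset.card_eq_card_image_mul {α β : Type*} [DecidableEq β] {s : Finset α} {f : α → β}
    {k : ℕ} (h : ∀ a ∈ s, #{x ∈ s | f x = f a} = k) : #s = #(s.image f) * k := by
  rw [card_eq_sum_card_image f s, ← smul_eq_mul, ← sum_const]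
  refine sum_congr rfl fun b hb => ?_
  obtain ⟨a, ha, rfl⟩ := mem_image.1 hb
  exact h a ha

theorem Set.ncard_eq_ncard_image_mul {α β : Type*} [Finite α] {s : Set α} {f : α → β} {k : ℕ}
    (h : ∀ a ∈ s, {x ∈ s | f x = f a}.ncard = k) : s.ncard = (f '' s).ncard * k := by
  classical
  have := Fintype.ofFinite α
  rw [Set.ncard_eq_toFinset_card', Set.ncard_eq_toFinset_card', Set.toFinset_image]
  refine Finset.card_eq_card_image_mul fun a ha => ?_
  rw [← h a (Set.mem_toFinset.1 ha), Set.ncard_eq_toFinset_card']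
  congr 1
  ext x
  simp

theorem Nat.eq_div_of_mul_mul_sub_one_eq {q n N : ℕ} (hq : 2 ≤ q) (hn : 1 ≤ n)
    (h : N * (q * (q - 1)) = q ^ n - q) : N = (q ^ (n - 1) - 1) / (q - 1) := by
  have hpow : q ^ n - q = q * (q ^ (n - 1) - 1) := by
    obtain ⟨m, rfl⟩ : ∃ m, n = m + 1 := ⟨n - 1, by omega⟩
    rw [Nat.add_sub_cancel, Nat.mul_sub, mul_one, pow_succ']
  rw [hpow, mul_left_comm] at h
  exact (Nat.div_eq_of_eq_mul_left (by omega) (Nat.eq_of_mul_eq_mul_left (by omega) h).symm).symm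

section AffineOrbit

variable {ι F : Type*}

def constTuples : Set (ι → F) := {y | ∃ d : F, y = fun _ => d}

theorem constTuples_eq_range : (constTuples : Set (ι → F)) = Set.range (Function.const ι) := by
  ext y
  exact exists_congr fun _ => eq_comm

theorem ncard_constTuples [Nonempty ι] : (constTuples : Set (ι → F)).ncard = Nat.card F := by
  rw [constTuples_eq_range, Set.ncard_range_of_injective Function.const_injective]

theorem ncard_compl_constTuples [Finite ι] [Nonempty ι] [Finite F] :
    (constTuplesᶜ : Set (ι → F)).ncard = Nat.card F ^ Nat.card ι - Nat.card F := by
  rw [Set.ncard_compl, ncard_constTuples, Nat.card_fun]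

variable [Field F]

def affineOrbit (x : ι → F) : Set (ι → F) := {y | ∃ a b : F, a ≠ 0 ∧ y = fun j => a * x j + b}

def affineAct (x : ι → F) (p : Fˣ × F) : ι → F := fun j => p.1 * x j + p.2

theorem affineOrbit_eq_range (x : ι → F) : affineOrbit x = Set.range (affineAct x) := by
  ext y
  constructor
  · rintro ⟨a, b, ha, rfl⟩
    exact ⟨(Units.mk0 a ha, b), rfl⟩
  · rintro ⟨⟨u, b⟩, rfl⟩
    exact ⟨u, b, u.ne_zero, rfl⟩

theorem mem_affineOrbit_self (x : ι → F) : x ∈ affineOrbit x :=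
  ⟨1, 0, one_ne_zero, by simp⟩

theorem affineOrbit_eq_of_mem {x y : ι → F} (h : y ∈ affineOrbit x) :
    affineOrbit y = affineOrbit x := by
  obtain ⟨a, b, ha, rfl⟩ := h
  ext z
  constructor
  · rintro ⟨a', b', ha', rfl⟩
    exact ⟨a' * a, a' * b + b', mul_ne_zero ha' ha, funext fun j => by ring⟩
  · rintro ⟨a', b', ha', rfl⟩
    refine ⟨a' / a, b' - a' * b / a, div_ne_zero ha' ha, funext fun j => ?_⟩
    field_simp
    ring

theorem affineOrbit_const (c : F) : affineOrbit (fun _ : ι => c) = constTuples := by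
  ext y
  constructor
  · rintro ⟨a, b, -, rfl⟩
    exact ⟨a * c + b, rfl⟩
  · rintro ⟨d, rfl⟩
    exact ⟨1, d - c, one_ne_zero, funext fun _ => by ring⟩

theorem affineOrbit_subset_compl_constTuples {x : ι → F} (hx : x ∉ constTuples) :
    affineOrbit x ⊆ constTuplesᶜ := by
  rintro y ⟨a, b, ha, rfl⟩ ⟨d, hd⟩
  refine hx ⟨(d - b) / a, funext fun j => ?_⟩
  rw [eq_div_iff ha]
  linear_combination congrFun hd j

theorem affineAct_injective {x : ι → F} (hx : x ∉ constTuples) :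
    Function.Injective (affineAct x) := by
  rintro ⟨u, b⟩ ⟨u', b'⟩ h
  have hj (j : ι) : (u : F) * x j + b = u' * x j + b' := congrFun h j
  by_cases hu : (u : F) = u'
  · obtain ⟨j⟩ : Nonempty ι := not_isEmpty_iff.1 fun _ => hx ⟨0, funext isEmptyElim⟩
    rw [hu] at hj
    exact Prod.ext (Units.ext hu) ((add_right_inj _).1 (hj j))
  · refine absurd ⟨(b' - b) / (u - u'), funext fun j => ?_⟩ hx
    rw [eq_div_iff (sub_ne_zero.mpr hu)]
    linear_combination hj j

theorem ncard_affineOrbit [Finite F] {x : ι → F} (hx : x ∉ constTuples) :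
    (affineOrbit x).ncard = Nat.card F * (Nat.card F - 1) := by
  rw [affineOrbit_eq_range, Set.ncard_range_of_injective (affineAct_injective hx), Nat.card_prod,
    Nat.card_units, mul_comm]

theorem ncard_compl_constTuples_eq_ncard_image_affineOrbit_mul [Finite ι] [Finite F] :
    (constTuplesᶜ : Set (ι → F)).ncard =
      (affineOrbit '' (constTuplesᶜ : Set (ι → F))).ncard * (Nat.card F * (Nat.card F - 1)) := by
  refine Set.ncard_eq_ncard_image_mul fun x hx => ?_
  rw [← ncard_affineOrbit hx]
  congr 1
  ext y
  exact ⟨fun ⟨_, hy⟩ => hy ▸ mem_affineOrbit_self y, fun hy =>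
    ⟨affineOrbit_subset_compl_constTuples hx hy, affineOrbit_eq_of_mem hy⟩⟩

end AffineOrbit

theorem stmt_15 (F : Type) [Field F] [Fintype F] (v t : ℕ)
    (hcard : Fintype.card F = v) (ht : 2 ≤ t) :
    ((∀ c : F,
        {y : Fin t → F | ∃ a b : F, a ≠ 0 ∧ y = fun j => a * (fun _ : Fin t => c) j + b} =
          {y : Fin t → F | ∃ d : F, y = fun _ => d}) ∧
      Nat.card {y : Fin t → F | ∃ d : F, y = fun _ => d} = v) ∧
    (∀ x : Fin t → F, (¬ ∃ d : F, x = fun _ => d) →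
      Nat.card {y : Fin t → F | ∃ a b : F, a ≠ 0 ∧ y = fun j => a * x j + b} = v * (v - 1)) ∧
    Nat.card {S : Set (Fin t → F) | ∃ x : Fin t → F, (¬ ∃ d : F, x = fun _ => d) ∧
        S = {y | ∃ a b : F, a ≠ 0 ∧ y = fun j => a * x j + b}} =
      (v ^ (t - 1) - 1) / (v - 1) := by
  rw [← hcard, ← Nat.card_eq_fintype_card]
  have : NeZero t := ⟨by omega⟩
  have hOrbits : {S : Set (Fin t → F) | ∃ x : Fin t → F, (¬ ∃ d : F, x = fun _ => d) ∧
      S = {y | ∃ a b : F, a ≠ 0 ∧ y = fun j => a * x j + b}} = affineOrbit '' constTuplesᶜ := by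
    ext S
    exact exists_congr fun x => and_congr_right fun _ => eq_comm
  simp only [Nat.card_coe_set_eq, hOrbits]
  refine ⟨⟨affineOrbit_const, ncard_constTuples⟩, fun x hx => ncard_affineOrbit hx, ?_⟩
  have hcount := ncard_compl_constTuples_eq_ncard_image_affineOrbit_mul (ι := Fin t) (F := F)
  rw [ncard_compl_constTuples, Nat.card_fin] at hcount
  exact Nat.eq_div_of_mul_mul_sub_one_eq Finite.one_lt_card (by omega) hcount.symm
end
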